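/- Given a strongly braided Rota–Baxter algebra (R, μ, P, σ) of weight λ, define x ≺_P y := xP(y) + λxy and x ≻_P y := P(x)y. Then (R, ≺_P, ≻_P, σ) is a braided dendriform algebra: the dendriform axioms hold and ≺_P, ≻_P are compatible with σ in the sense that σ(id⊗≺_P) = (≺_P⊗id)σ₂σ₁, σ(≺_P⊗id) = (id⊗≺_P)σ₁σ₂, and likewise for ≻_P. -/

import Mathlib

set_option maxHeartbeats 1000000
noncomputable section
open TensorProduct LinearMap

/-- `f ⊗ id` on a triple tensor product. -/
def op12 {k M : Type} [Field k] [AddCommGroup M] [Module k M]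
    (f : M ⊗[k] M →ₗ[k] M ⊗[k] M) : (M ⊗[k] M) ⊗[k] M →ₗ[k] (M ⊗[k] M) ⊗[k] M :=
  rTensor M f

/-- `id ⊗ f` on a triple tensor product. -/
def op23 {k M : Type} [Field k] [AddCommGroup M] [Module k M]
    (f : M ⊗[k] M →ₗ[k] M ⊗[k] M) : (M ⊗[k] M) ⊗[k] M →ₗ[k] (M ⊗[k] M) ⊗[k] M :=
  (TensorProduct.assoc k M M M).symm.toLinearMap ∘ₗ lTensor M f
    ∘ₗ (TensorProduct.assoc k M M M).toLinearMap

/-- `id ⊗ f ⊗ id` on a fourfold tensor product (`f` acting on the middle two factors). -/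
def midOp {k M : Type} [Field k] [AddCommGroup M] [Module k M]
    (f : M ⊗[k] M →ₗ[k] M ⊗[k] M) :
    (M ⊗[k] M) ⊗[k] (M ⊗[k] M) →ₗ[k] (M ⊗[k] M) ⊗[k] (M ⊗[k] M) :=
  (TensorProduct.assoc k M M (M ⊗[k] M)).symm.toLinearMap
    ∘ₗ lTensor M (TensorProduct.assoc k M M M).toLinearMap
    ∘ₗ lTensor M (rTensor M f)
    ∘ₗ lTensor M (TensorProduct.assoc k M M M).symm.toLinearMap
    ∘ₗ (TensorProduct.assoc k M M (M ⊗[k] M)).toLinearMap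

/-!
The dendriform identities are the classical computation: after expanding `≺_P` and `≻_P` and
reassociating, the first and third reduce to the Rota–Baxter identity and the second to
associativity alone.

The braiding conditions `σ(id ⊗ m) = (m ⊗ id)σ₂σ₁` and `σ(m ⊗ id) = (id ⊗ m)σ₁σ₂` are linear in
`m`, and each is preserved by precomposing `m` with `P` on either factor, because `σ` moves `P`
from one tensor factor to the other. Since `≺_P = μ(id ⊗ P) + λμ` and `≻_P = μ(P ⊗ id)`, they
follow from the braided-algebra axioms for `μ`.
-/

section Dendriform

variable {k R : Type*} [CommRing k] [AddCommGroup R] [Module k R]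
  (mu : R ⊗[k] R →ₗ[k] R) (P : R →ₗ[k] R) (lam : k)

def rbPrec : R ⊗[k] R →ₗ[k] R := mu ∘ₗ lTensor R P + lam • mu

def rbSucc : R ⊗[k] R →ₗ[k] R := mu ∘ₗ rTensor R P

variable {mu P lam}

@[simp]
theorem rbPrec_tmul (x y : R) :
    rbPrec mu P lam (x ⊗ₜ y) = mu (x ⊗ₜ P y) + lam • mu (x ⊗ₜ y) := by
  simp [rbPrec]

@[simp]
theorem rbSucc_tmul (x y : R) : rbSucc mu P (x ⊗ₜ y) = mu (P x ⊗ₜ y) := by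
  simp [rbSucc]

theorem rbPrec_rbPrec_tmul
    (hmu : ∀ x y z : R, mu (mu (x ⊗ₜ y) ⊗ₜ z) = mu (x ⊗ₜ mu (y ⊗ₜ z)))
    (hrb : ∀ x y : R, mu (P x ⊗ₜ P y)
      = P (mu (x ⊗ₜ P y)) + P (mu (P x ⊗ₜ y)) + lam • P (mu (x ⊗ₜ y)))
    (x y z : R) :
    rbPrec mu P lam (rbPrec mu P lam (x ⊗ₜ y) ⊗ₜ z)
      = rbPrec mu P lam (x ⊗ₜ (rbPrec mu P lam (y ⊗ₜ z) + rbSucc mu P (y ⊗ₜ z))) := by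
  simp only [rbPrec_tmul, rbSucc_tmul, map_add, map_smul, add_tmul, tmul_add, tmul_smul,
    ← smul_tmul', hmu, hrb y z]
  module

theorem rbPrec_rbSucc_tmul
    (hmu : ∀ x y z : R, mu (mu (x ⊗ₜ y) ⊗ₜ z) = mu (x ⊗ₜ mu (y ⊗ₜ z))) (x y z : R) :
    rbPrec mu P lam (rbSucc mu P (x ⊗ₜ y) ⊗ₜ z)
      = rbSucc mu P (x ⊗ₜ rbPrec mu P lam (y ⊗ₜ z)) := by
  simp only [rbPrec_tmul, rbSucc_tmul, tmul_add, tmul_smul, map_add, map_smul, hmu]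

theorem rbSucc_rbSucc_tmul
    (hmu : ∀ x y z : R, mu (mu (x ⊗ₜ y) ⊗ₜ z) = mu (x ⊗ₜ mu (y ⊗ₜ z)))
    (hrb : ∀ x y : R, mu (P x ⊗ₜ P y)
      = P (mu (x ⊗ₜ P y)) + P (mu (P x ⊗ₜ y)) + lam • P (mu (x ⊗ₜ y)))
    (x y z : R) :
    rbSucc mu P (x ⊗ₜ rbSucc mu P (y ⊗ₜ z))
      = rbSucc mu P ((rbPrec mu P lam (x ⊗ₜ y) + rbSucc mu P (x ⊗ₜ y)) ⊗ₜ z) := by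
  simp only [rbPrec_tmul, rbSucc_tmul, map_add, map_smul, add_tmul, ← smul_tmul', ← hmu, hrb x y]
  module

end Dendriform

theorem LinearMap.lTensor_lTensor_comp_assoc {k M N P Q : Type*} [CommSemiring k]
    [AddCommMonoid M] [AddCommMonoid N] [AddCommMonoid P] [AddCommMonoid Q]
    [Module k M] [Module k N] [Module k P] [Module k Q] (f : P →ₗ[k] Q) :
    lTensor M (lTensor N f) ∘ₗ (TensorProduct.assoc k M N P).toLinearMap
      = (TensorProduct.assoc k M N Q).toLinearMap ∘ₗ lTensor (M ⊗[k] N) f :=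
  TensorProduct.ext_threefold fun _ _ _ => rfl

section Braided

variable {k R : Type} [Field k] [AddCommGroup R] [Module k R]

theorem op12_comp (f g : R ⊗[k] R →ₗ[k] R ⊗[k] R) : op12 (f ∘ₗ g) = op12 f ∘ₗ op12 g :=
  rTensor_comp R f g

theorem op23_comp (f g : R ⊗[k] R →ₗ[k] R ⊗[k] R) : op23 (f ∘ₗ g) = op23 f ∘ₗ op23 g := by
  ext x y z
  simp [op23]

theorem op12_rTensor (P : R →ₗ[k] R) : op12 (rTensor R P) = rTensor R (rTensor R P) := rfl

theorem op12_lTensor (P : R →ₗ[k] R) : op12 (lTensor R P) = rTensor R (lTensor R P) := rfl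

theorem op23_rTensor (P : R →ₗ[k] R) : op23 (rTensor R P) = rTensor R (lTensor R P) := by
  ext x y z
  simp [op23]

theorem op23_lTensor (P : R →ₗ[k] R) : op23 (lTensor R P) = lTensor (R ⊗[k] R) P :=
  (lTensor_tensor R P).symm

theorem op12_comp_lTensor (f : R ⊗[k] R →ₗ[k] R ⊗[k] R) (P : R →ₗ[k] R) :
    op12 f ∘ₗ lTensor (R ⊗[k] R) P = lTensor (R ⊗[k] R) P ∘ₗ op12 f := by
  rw [op12, rTensor_comp_lTensor, lTensor_comp_rTensor]

theorem op23_comp_rTensor_rTensor (f : R ⊗[k] R →ₗ[k] R ⊗[k] R) (P : R →ₗ[k] R) :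
    op23 f ∘ₗ rTensor R (rTensor R P) = rTensor R (rTensor R P) ∘ₗ op23 f := by
  ext x y z
  simp only [op23, AlgebraTensorModule.curry_apply, curry_apply, restrictScalars_self, coe_comp,
    LinearEquiv.coe_coe, Function.comp_apply, rTensor_tmul, TensorProduct.assoc_tmul, lTensor_tmul]
  induction f (y ⊗ₜ z) using TensorProduct.induction_on with
  | zero => simp
  | tmul a b => rfl
  | add a b ha hb => simp only [tmul_add, map_add, ha, hb]

variable {sg : R ⊗[k] R →ₗ[k] R ⊗[k] R} {P : R →ₗ[k] R}

theorem op23_op12_comp_lTensor (hP : sg ∘ₗ lTensor R P = rTensor R P ∘ₗ sg) :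
    op23 sg ∘ₗ op12 sg ∘ₗ lTensor (R ⊗[k] R) P = rTensor R (lTensor R P) ∘ₗ op23 sg ∘ₗ op12 sg := by
  rw [op12_comp_lTensor, ← op23_lTensor, ← comp_assoc, ← op23_comp, hP, op23_comp, op23_rTensor,
    comp_assoc]

theorem op23_op12_comp_rTensor_lTensor (hP : sg ∘ₗ lTensor R P = rTensor R P ∘ₗ sg) :
    op23 sg ∘ₗ op12 sg ∘ₗ rTensor R (lTensor R P)
      = rTensor R (rTensor R P) ∘ₗ op23 sg ∘ₗ op12 sg := by
  rw [← op12_lTensor, ← op12_comp, hP, op12_comp, op12_rTensor, ← comp_assoc,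
    op23_comp_rTensor_rTensor, comp_assoc]

theorem op12_op23_comp_rTensor_rTensor (hP : sg ∘ₗ rTensor R P = lTensor R P ∘ₗ sg) :
    op12 sg ∘ₗ op23 sg ∘ₗ rTensor R (rTensor R P)
      = rTensor R (lTensor R P) ∘ₗ op12 sg ∘ₗ op23 sg := by
  rw [op23_comp_rTensor_rTensor, ← op12_rTensor, ← comp_assoc, ← op12_comp, hP, op12_comp,
    op12_lTensor, comp_assoc]

theorem op12_op23_comp_rTensor_lTensor (hP : sg ∘ₗ rTensor R P = lTensor R P ∘ₗ sg) :
    op12 sg ∘ₗ op23 sg ∘ₗ rTensor R (lTensor R P) = lTensor (R ⊗[k] R) P ∘ₗ op12 sg ∘ₗ op23 sg := by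
  rw [← op23_rTensor, ← op23_comp, hP, op23_comp, op23_lTensor, ← comp_assoc, op12_comp_lTensor,
    comp_assoc]

variable (sg) in
def BraidCompatibleRight (m : R ⊗[k] R →ₗ[k] R) : Prop :=
  sg ∘ₗ lTensor R m ∘ₗ (TensorProduct.assoc k R R R).toLinearMap = rTensor R m ∘ₗ op23 sg ∘ₗ op12 sg

variable (sg) in
def BraidCompatibleLeft (m : R ⊗[k] R →ₗ[k] R) : Prop :=
  sg ∘ₗ rTensor R m = lTensor R m ∘ₗ (TensorProduct.assoc k R R R).toLinearMap ∘ₗ op12 sg ∘ₗ op23 sg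

variable {m n : R ⊗[k] R →ₗ[k] R}

theorem BraidCompatibleRight.add (hm : BraidCompatibleRight sg m) (hn : BraidCompatibleRight sg n) :
    BraidCompatibleRight sg (m + n) := by
  simp only [BraidCompatibleRight, lTensor_add, rTensor_add, add_comp, comp_add] at *
  rw [hm, hn]

theorem BraidCompatibleRight.smul (hm : BraidCompatibleRight sg m) (c : k) :
    BraidCompatibleRight sg (c • m) := by
  simp only [BraidCompatibleRight, lTensor_smul, rTensor_smul, smul_comp, comp_smul] at *
  rw [hm]

theorem BraidCompatibleLeft.add (hm : BraidCompatibleLeft sg m) (hn : BraidCompatibleLeft sg n) :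
    BraidCompatibleLeft sg (m + n) := by
  simp only [BraidCompatibleLeft, lTensor_add, rTensor_add, add_comp, comp_add] at *
  rw [hm, hn]

theorem BraidCompatibleLeft.smul (hm : BraidCompatibleLeft sg m) (c : k) :
    BraidCompatibleLeft sg (c • m) := by
  simp only [BraidCompatibleLeft, lTensor_smul, rTensor_smul, smul_comp, comp_smul] at *
  rw [hm]

theorem BraidCompatibleRight.comp_lTensor (hm : BraidCompatibleRight sg m)
    (hP : sg ∘ₗ lTensor R P = rTensor R P ∘ₗ sg) : BraidCompatibleRight sg (m ∘ₗ lTensor R P) := by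
  unfold BraidCompatibleRight at *
  rw [lTensor_comp, rTensor_comp, comp_assoc, lTensor_lTensor_comp_assoc,
    comp_assoc, ← op23_op12_comp_lTensor hP]
  simp only [← comp_assoc] at hm ⊢
  rw [hm]

theorem BraidCompatibleRight.comp_rTensor (hm : BraidCompatibleRight sg m)
    (hP : sg ∘ₗ lTensor R P = rTensor R P ∘ₗ sg) : BraidCompatibleRight sg (m ∘ₗ rTensor R P) := by
  unfold BraidCompatibleRight at *
  rw [lTensor_comp, rTensor_comp, comp_assoc, lTensor_rTensor_comp_assoc,
    comp_assoc, ← op23_op12_comp_rTensor_lTensor hP]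
  simp only [← comp_assoc] at hm ⊢
  rw [hm]

theorem BraidCompatibleLeft.comp_lTensor (hm : BraidCompatibleLeft sg m)
    (hP : sg ∘ₗ rTensor R P = lTensor R P ∘ₗ sg) : BraidCompatibleLeft sg (m ∘ₗ lTensor R P) := by
  unfold BraidCompatibleLeft at *
  rw [rTensor_comp, ← comp_assoc, hm, comp_assoc, comp_assoc, comp_assoc,
    op12_op23_comp_rTensor_lTensor hP, ← comp_assoc (op12 sg ∘ₗ op23 sg),
    ← lTensor_lTensor_comp_assoc, lTensor_comp, comp_assoc, comp_assoc]

theorem BraidCompatibleLeft.comp_rTensor (hm : BraidCompatibleLeft sg m)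
    (hP : sg ∘ₗ rTensor R P = lTensor R P ∘ₗ sg) : BraidCompatibleLeft sg (m ∘ₗ rTensor R P) := by
  unfold BraidCompatibleLeft at *
  rw [rTensor_comp, ← comp_assoc, hm, comp_assoc, comp_assoc, comp_assoc,
    op12_op23_comp_rTensor_rTensor hP, ← comp_assoc (op12 sg ∘ₗ op23 sg),
    ← lTensor_rTensor_comp_assoc, lTensor_comp, comp_assoc, comp_assoc]

end Braided

theorem strongly_braided_RB_gives_braided_dendriform
    {k R : Type} [Field k] [AddCommGroup R] [Module k R]
    (lam : k)
    (mu : R ⊗[k] R →ₗ[k] R)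
    (hassoc : mu ∘ₗ rTensor R mu
      = mu ∘ₗ lTensor R mu ∘ₗ (TensorProduct.assoc k R R R).toLinearMap)
    (sg : R ⊗[k] R →ₗ[k] R ⊗[k] R)
    (hba1 : lTensor R mu ∘ₗ (TensorProduct.assoc k R R R).toLinearMap ∘ₗ op12 sg ∘ₗ op23 sg
      = sg ∘ₗ rTensor R mu)
    (hba2 : rTensor R mu ∘ₗ op23 sg ∘ₗ op12 sg
      = sg ∘ₗ lTensor R mu ∘ₗ (TensorProduct.assoc k R R R).toLinearMap)
    (P : R →ₗ[k] R)
    (hrb : ∀ x y : R, mu (P x ⊗ₜ[k] P y)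
      = P (mu (x ⊗ₜ[k] P y)) + P (mu (P x ⊗ₜ[k] y)) + lam • P (mu (x ⊗ₜ[k] y)))
    (hright : sg ∘ₗ rTensor R P = lTensor R P ∘ₗ sg)
    (hleft : sg ∘ₗ lTensor R P = rTensor R P ∘ₗ sg) :
    -- the two products :
    let pl : R ⊗[k] R →ₗ[k] R := mu ∘ₗ lTensor R P + lam • mu   -- `≺_P`
    let pr : R ⊗[k] R →ₗ[k] R := mu ∘ₗ rTensor R P              -- `≻_P`
    -- dendriform axioms :
    (∀ x y z : R, pl (pl (x ⊗ₜ[k] y) ⊗ₜ[k] z) = pl (x ⊗ₜ[k] (pl (y ⊗ₜ[k] z) + pr (y ⊗ₜ[k] z))))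
    ∧ (∀ x y z : R, pl (pr (x ⊗ₜ[k] y) ⊗ₜ[k] z) = pr (x ⊗ₜ[k] pl (y ⊗ₜ[k] z)))
    ∧ (∀ x y z : R, pr (x ⊗ₜ[k] pr (y ⊗ₜ[k] z)) = pr ((pl (x ⊗ₜ[k] y) + pr (x ⊗ₜ[k] y)) ⊗ₜ[k] z))
    -- σ(id⊗≺_P) = (≺_P⊗id)σ₂σ₁ :
    ∧ sg ∘ₗ lTensor R pl ∘ₗ (TensorProduct.assoc k R R R).toLinearMap
        = rTensor R pl ∘ₗ op23 sg ∘ₗ op12 sg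
    -- σ(≺_P⊗id) = (id⊗≺_P)σ₁σ₂ :
    ∧ sg ∘ₗ rTensor R pl
        = lTensor R pl ∘ₗ (TensorProduct.assoc k R R R).toLinearMap ∘ₗ op12 sg ∘ₗ op23 sg
    -- σ(id⊗≻_P) = (≻_P⊗id)σ₂σ₁ :
    ∧ sg ∘ₗ lTensor R pr ∘ₗ (TensorProduct.assoc k R R R).toLinearMap
        = rTensor R pr ∘ₗ op23 sg ∘ₗ op12 sg
    -- σ(≻_P⊗id) = (id⊗≻_P)σ₁σ₂ :
    ∧ sg ∘ₗ rTensor R pr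
        = lTensor R pr ∘ₗ (TensorProduct.assoc k R R R).toLinearMap ∘ₗ op12 sg ∘ₗ op23 sg := by
  intro pl pr
  have hmu : ∀ x y z : R, mu (mu (x ⊗ₜ y) ⊗ₜ z) = mu (x ⊗ₜ mu (y ⊗ₜ z)) := fun x y z => by
    simpa using LinearMap.congr_fun hassoc ((x ⊗ₜ y) ⊗ₜ z)
  have hmuR : BraidCompatibleRight sg mu := hba2.symm
  have hmuL : BraidCompatibleLeft sg mu := hba1.symm
  exact ⟨rbPrec_rbPrec_tmul hmu hrb, rbPrec_rbSucc_tmul hmu, rbSucc_rbSucc_tmul hmu hrb,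
    (hmuR.comp_lTensor hleft).add (hmuR.smul lam), (hmuL.comp_lTensor hright).add (hmuL.smul lam),
    hmuR.comp_rTensor hleft, hmuL.comp_rTensor hright⟩
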